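/- arXiv:2605.30981 — 2 statements merged into one kernel-verified Lean document; each statement's English description precedes it below -/
import Mathlib

section
/- The Fatigue Index is Lipschitz continuous with explicit constant L = w_A + w_E·max(1/H_ℓ, 1/β) + w_D/κ: for all real numbers a, e, d, a', e', d', one has |FI(a,e,d) − FI(a',e',d')| ≤ L · max(|a − a'|, |e − e'|, |d − d'|) (Axiom A4, temporal stability, realized by the concrete Fatigue Index). -/
/-- `clip x a b = min (max x a) b`. -/
noncomputable def clip (x a b : ℝ) : ℝ := min (max x a) b

/-- Attention penalty. -/
noncomputable def phiA (a : ℝ) : ℝ := 1 - clip a 0 1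

/-- Entropy penalty with healthy band `[Hl, Hu]` and slope parameter `β`. -/
noncomputable def phiE (Hl Hu β e : ℝ) : ℝ :=
  if e < Hl then clip ((Hl - e) / Hl) 0 1
  else if e ≤ Hu then 0
  else clip ((e - Hu) / β) 0 1

/-- Drift penalty with cap `κ`. -/
noncomputable def phiD (κ d : ℝ) : ℝ := clip (d / κ) 0 1

/-- The Fatigue Index. -/
noncomputable def FI (Hl Hu β κ wA wE wD a e d : ℝ) : ℝ :=
  wA * phiA a + wE * phiE Hl Hu β e + wD * phiD κ d

lemma clip_lip (x y a b : ℝ) : |clip x a b - clip y a b| ≤ |x - y| := by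
  unfold clip
  calc |min (max x a) b - min (max y a) b|
      ≤ max |max x a - max y a| |b - b| := abs_min_sub_min_le_max _ _ _ _
    _ = |max x a - max y a| := by simp
    _ ≤ max |x - y| |a - a| := abs_max_sub_max_le_max _ _ _ _
    _ = |x - y| := by simp

lemma clip01_nonneg (x : ℝ) : 0 ≤ clip x 0 1 := by
  unfold clip
  exact le_min (le_max_right _ _) zero_le_one

lemma clip01_eq_zero {x : ℝ} (hx : x ≤ 0) : clip x 0 1 = 0 := by
  unfold clip
  rw [max_eq_right hx, min_eq_left zero_le_one]

lemma phiE_eq (Hl Hu β e : ℝ) (hHl : 0 < Hl) (hband : Hl ≤ Hu) (hβ : 0 < β) :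
    phiE Hl Hu β e = max (clip ((Hl - e) / Hl) 0 1) (clip ((e - Hu) / β) 0 1) := by
  unfold phiE
  split_ifs with h1 h2
  · have : (e - Hu) / β ≤ 0 := by
      apply div_nonpos_of_nonpos_of_nonneg <;> linarith
    rw [clip01_eq_zero this, max_eq_left (clip01_nonneg _)]
  · have : (Hl - e) / Hl ≤ 0 := by
      apply div_nonpos_of_nonpos_of_nonneg <;> linarith
    rw [clip01_eq_zero this]
    have : (e - Hu) / β ≤ 0 := by
      apply div_nonpos_of_nonpos_of_nonneg <;> linarith
    rw [clip01_eq_zero this]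
    simp
  · have : (Hl - e) / Hl ≤ 0 := by
      apply div_nonpos_of_nonpos_of_nonneg <;> linarith
    rw [clip01_eq_zero this, max_eq_right (clip01_nonneg _)]

/-- Axiom A4 (temporal stability): the Fatigue Index is Lipschitz continuous
with explicit constant `L = wA + wE * max (1/Hl) (1/β) + wD / κ` with respect to
the max (sup) norm on the three signals. -/
theorem FI_lipschitz (Hl Hu β κ wA wE wD : ℝ)
    (hHl : 0 < Hl) (hband : Hl ≤ Hu) (hβ : 0 < β) (hκ : 0 < κ)
    (hwA : 0 ≤ wA) (hwE : 0 ≤ wE) (hwD : 0 ≤ wD) (hsum : wA + wE + wD = 1) :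
    ∀ a e d a' e' d' : ℝ,
      |FI Hl Hu β κ wA wE wD a e d - FI Hl Hu β κ wA wE wD a' e' d'| ≤
        (wA + wE * max (1 / Hl) (1 / β) + wD / κ) *
          max (|a - a'|) (max (|e - e'|) (|d - d'|)) := by
  intro a e d a' e' d'
  set M := max (1 / Hl) (1 / β) with hM
  set N := max (|a - a'|) (max (|e - e'|) (|d - d'|)) with hN
  have hNa : |a - a'| ≤ N := le_max_left _ _
  have hNe : |e - e'| ≤ N := le_trans (le_max_left _ _) (le_max_right _ _)
  have hNd : |d - d'| ≤ N := le_trans (le_max_right _ _) (le_max_right _ _)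
  have hM0 : 0 ≤ M := le_trans (le_of_lt (by positivity)) (le_max_left (1/Hl) (1/β))
  -- phiA
  have hA : |phiA a - phiA a'| ≤ |a - a'| := by
    unfold phiA
    have := clip_lip a' a 0 1
    calc |1 - clip a 0 1 - (1 - clip a' 0 1)| = |clip a' 0 1 - clip a 0 1| := by ring_nf
      _ ≤ |a' - a| := clip_lip a' a 0 1
      _ = |a - a'| := abs_sub_comm _ _
  -- phiE
  have hE : |phiE Hl Hu β e - phiE Hl Hu β e'| ≤ M * |e - e'| := by
    rw [phiE_eq Hl Hu β e hHl hband hβ, phiE_eq Hl Hu β e' hHl hband hβ]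
    have h1 : |clip ((Hl - e) / Hl) 0 1 - clip ((Hl - e') / Hl) 0 1| ≤ (1/Hl) * |e - e'| := by
      calc |clip ((Hl - e) / Hl) 0 1 - clip ((Hl - e') / Hl) 0 1|
          ≤ |(Hl - e) / Hl - (Hl - e') / Hl| := clip_lip _ _ _ _
        _ = (1/Hl) * |e - e'| := by
            rw [div_sub_div_same, show Hl - e - (Hl - e') = -(e - e') by ring, neg_div,
              abs_neg, abs_div, abs_of_pos hHl]
            ring
    have h2 : |clip ((e - Hu) / β) 0 1 - clip ((e' - Hu) / β) 0 1| ≤ (1/β) * |e - e'| := by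
      calc |clip ((e - Hu) / β) 0 1 - clip ((e' - Hu) / β) 0 1|
          ≤ |(e - Hu) / β - (e' - Hu) / β| := clip_lip _ _ _ _
        _ = (1/β) * |e - e'| := by
            rw [div_sub_div_same, show e - Hu - (e' - Hu) = e - e' by ring,
              abs_div, abs_of_pos hβ]
            ring
    calc |max (clip ((Hl - e) / Hl) 0 1) (clip ((e - Hu) / β) 0 1) -
          max (clip ((Hl - e') / Hl) 0 1) (clip ((e' - Hu) / β) 0 1)|
        ≤ max |clip ((Hl - e) / Hl) 0 1 - clip ((Hl - e') / Hl) 0 1|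
            |clip ((e - Hu) / β) 0 1 - clip ((e' - Hu) / β) 0 1| :=
          abs_max_sub_max_le_max _ _ _ _
      _ ≤ max ((1/Hl) * |e - e'|) ((1/β) * |e - e'|) := max_le_max h1 h2
      _ ≤ M * |e - e'| := by
          apply max_le <;> apply mul_le_mul_of_nonneg_right _ (abs_nonneg _)
          · exact le_max_left _ _
          · exact le_max_right _ _
  -- phiD
  have hD : |phiD κ d - phiD κ d'| ≤ (1/κ) * |d - d'| := by
    unfold phiD
    calc |clip (d / κ) 0 1 - clip (d' / κ) 0 1| ≤ |d / κ - d' / κ| := clip_lip _ _ _ _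
      _ = (1/κ) * |d - d'| := by
          rw [div_sub_div_same, abs_div, abs_of_pos hκ]; ring
  -- combine
  unfold FI
  have key : |wA * phiA a + wE * phiE Hl Hu β e + wD * phiD κ d -
      (wA * phiA a' + wE * phiE Hl Hu β e' + wD * phiD κ d')| ≤
      wA * |phiA a - phiA a'| + wE * |phiE Hl Hu β e - phiE Hl Hu β e'| +
        wD * |phiD κ d - phiD κ d'| := by
    calc |wA * phiA a + wE * phiE Hl Hu β e + wD * phiD κ d -
        (wA * phiA a' + wE * phiE Hl Hu β e' + wD * phiD κ d')|
        = |wA * (phiA a - phiA a') + (wE * (phiE Hl Hu β e - phiE Hl Hu β e') +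
            wD * (phiD κ d - phiD κ d'))| := by ring_nf
      _ ≤ |wA * (phiA a - phiA a')| + |wE * (phiE Hl Hu β e - phiE Hl Hu β e') +
            wD * (phiD κ d - phiD κ d')| := abs_add_le _ _
      _ ≤ |wA * (phiA a - phiA a')| + (|wE * (phiE Hl Hu β e - phiE Hl Hu β e')| +
            |wD * (phiD κ d - phiD κ d')|) := by gcongr; exact abs_add_le _ _
      _ = wA * |phiA a - phiA a'| + wE * |phiE Hl Hu β e - phiE Hl Hu β e'| +
            wD * |phiD κ d - phiD κ d'| := by
          rw [abs_mul, abs_mul, abs_mul, abs_of_nonneg hwA, abs_of_nonneg hwE,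
            abs_of_nonneg hwD]
          ring
  refine key.trans ?_
  have t1 : wA * |phiA a - phiA a'| ≤ wA * N :=
    mul_le_mul_of_nonneg_left (hA.trans hNa) hwA
  have t2 : wE * |phiE Hl Hu β e - phiE Hl Hu β e'| ≤ wE * (M * N) := by
    apply mul_le_mul_of_nonneg_left _ hwE
    exact hE.trans (mul_le_mul_of_nonneg_left hNe hM0)
  have t3 : wD * |phiD κ d - phiD κ d'| ≤ wD * ((1/κ) * N) := by
    apply mul_le_mul_of_nonneg_left _ hwD
    exact hD.trans (mul_le_mul_of_nonneg_left hNd (by positivity))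
  have : (wA + wE * M + wD / κ) * N = wA * N + wE * (M * N) + wD * ((1/κ) * N) := by
    field_simp
  linarith
end

section
/- Hysteresis reduces alert flips: let x₀, x₁, …, x_n be a finite real sequence and let thresholds θ_lo < θ_hi be given. Define the hysteresis alert states S₋₁ = false and, for t ≥ 0, S_t = true if x_t ≥ θ_hi, S_t = false if x_t < θ_lo, and S_t = S_{t−1} otherwise. For any fixed θ with θ_lo < θ ≤ θ_hi, define the naive alert states N_t = (x_t ≥ θ) for t = 0, …, n. Then the number of hysteresis flips, #{t : 0 ≤ t ≤ n and S_t ≠ S_{t−1}} (with S₋₁ = false), is at most the number of naive flips #{t : 1 ≤ t ≤ n and N_t ≠ N_{t−1}} plus one. -/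
open Classical

/-- Hysteresis alert state with activation threshold `θhi` and deactivation
threshold `θlo`, starting from the inactive state (`S₋₁ = false`):
`S t = true` if `x t ≥ θhi`, `S t = false` if `x t < θlo`, and otherwise
`S t = S (t-1)`. -/
noncomputable def hystState (θlo θhi : ℝ) (x : ℕ → ℝ) : ℕ → Bool
  | 0 => if θhi ≤ x 0 then true else if x 0 < θlo then false else false
  | t + 1 =>
      if θhi ≤ x (t + 1) then true
      else if x (t + 1) < θlo then false
      else hystState θlo θhi x t

/-- Number of hysteresis alert flips among steps `0, …, n`, counting a flip at
step `t` when the state differs from the previous state (with `S₋₁ = false`). -/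
noncomputable def hystFlips (θlo θhi : ℝ) (x : ℕ → ℝ) (n : ℕ) : ℕ :=
  ((Finset.range (n + 1)).filter (fun t =>
    hystState θlo θhi x t ≠
      (if t = 0 then false else hystState θlo θhi x (t - 1)))).card

/-- Number of naive single-threshold alert flips among steps `1, …, n`, where
the naive alert state at step `t` is `x t ≥ θ`. -/
noncomputable def naiveFlips (θ : ℝ) (x : ℕ → ℝ) (n : ℕ) : ℕ :=
  ((Finset.Icc 1 n).filter (fun t => ¬((θ ≤ x t) ↔ (θ ≤ x (t - 1))))).card

lemma hystState_zero (θlo θhi : ℝ) (x : ℕ → ℝ) :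
    hystState θlo θhi x 0 = if θhi ≤ x 0 then true else if x 0 < θlo then false else false := rfl

lemma hystState_succ (θlo θhi : ℝ) (x : ℕ → ℝ) (t : ℕ) :
    hystState θlo θhi x (t + 1) = if θhi ≤ x (t + 1) then true
      else if x (t + 1) < θlo then false else hystState θlo θhi x t := rfl

lemma hystFlips_succ (θlo θhi : ℝ) (x : ℕ → ℝ) (n : ℕ) :
    hystFlips θlo θhi x (n + 1) =
      hystFlips θlo θhi x n +
        (if hystState θlo θhi x (n + 1) = hystState θlo θhi x n then 0 else 1) := by
  unfold hystFlips
  rw [Finset.range_add_one, Finset.filter_insert]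
  by_cases h : hystState θlo θhi x (n + 1) = hystState θlo θhi x n
  · rw [if_neg (by simp [h]), if_pos h]; omega
  · rw [if_pos (by simp [h]), if_neg h,
      Finset.card_insert_of_notMem (by simp)]

lemma naiveFlips_succ (θ : ℝ) (x : ℕ → ℝ) (n : ℕ) :
    naiveFlips θ x (n + 1) =
      naiveFlips θ x n + (if (θ ≤ x (n + 1)) ↔ (θ ≤ x n) then 0 else 1) := by
  unfold naiveFlips
  rw [show Finset.Icc 1 (n + 1) = insert (n + 1) (Finset.Icc 1 n) by
        ext t; simp [Finset.mem_Icc]; omega,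
      Finset.filter_insert]
  by_cases h : (θ ≤ x (n + 1)) ↔ (θ ≤ x n)
  · rw [if_neg (by simp [h]), if_pos h]; omega
  · rw [if_pos (by simp [h]), if_neg h,
      Finset.card_insert_of_notMem (by simp)]

lemma flip_naive (θlo θhi θ : ℝ) (x : ℕ → ℝ)
    (hlo : θlo < θ) (hhi : θ ≤ θhi) (t : ℕ)
    (h : hystState θlo θhi x t ≠ (if t = 0 then false else hystState θlo θhi x (t - 1))) :
    hystState θlo θhi x t = decide (θ ≤ x t) := by
  cases t with
  | zero =>
    rw [if_pos rfl] at h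
    rw [hystState_zero] at h ⊢
    split_ifs at h ⊢ with h1 h2
    · simp only [true_eq_decide_iff]; linarith
    · exact absurd rfl h
    · exact absurd rfl h
  | succ s =>
    rw [if_neg (Nat.succ_ne_zero s)] at h
    simp only [Nat.add_sub_cancel] at h
    rw [hystState_succ] at h ⊢
    split_ifs at h ⊢ with h1 h2
    · simp only [true_eq_decide_iff]; linarith
    · simp only [false_eq_decide_iff, not_le]; linarith
    · exact absurd rfl h

lemma key (θlo θhi θ : ℝ) (x : ℕ → ℝ)
    (hlo : θlo < θ) (hhi : θ ≤ θhi) (n : ℕ) :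
    hystFlips θlo θhi x n ≤ naiveFlips θ x n +
      (if hystState θlo θhi x n = decide (θ ≤ x n) then 1 else 0) := by
  induction n with
  | zero =>
    have hcard : hystFlips θlo θhi x 0 ≤ 1 := by
      unfold hystFlips
      exact le_trans (Finset.card_filter_le _ _) (by simp)
    by_cases h : hystState θlo θhi x 0 ≠ (if (0 : ℕ) = 0 then false else hystState θlo θhi x 0)
    · rw [if_pos (flip_naive θlo θhi θ x hlo hhi 0 h)]
      omega
    · push_neg at h
      rw [if_pos rfl] at h
      have h0 : hystFlips θlo θhi x 0 = 0 := by
        unfold hystFlips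
        rw [Finset.card_eq_zero, Finset.filter_eq_empty_iff]
        intro t ht
        simp only [Finset.mem_range] at ht
        have ht0 : t = 0 := by omega
        subst ht0
        intro hc; exact hc (by rw [if_pos rfl, h])
      omega
  | succ m ih =>
    rw [hystFlips_succ, naiveFlips_succ]
    by_cases hf : hystState θlo θhi x (m + 1) = hystState θlo θhi x m
    · rw [if_pos hf]
      by_cases hn : (θ ≤ x (m + 1)) ↔ (θ ≤ x m)
      · rw [if_pos hn]
        have hiff : (hystState θlo θhi x (m + 1) = decide (θ ≤ x (m + 1))) ↔
            (hystState θlo θhi x m = decide (θ ≤ x m)) := by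
          rw [hf]
          constructor <;> intro hh <;> rw [hh] <;> simp [hn]
        by_cases hp : hystState θlo θhi x m = decide (θ ≤ x m)
        · rw [if_pos (hiff.mpr hp)]; rw [if_pos hp] at ih; omega
        · rw [if_neg (fun hh => hp (hiff.mp hh))]; rw [if_neg hp] at ih; omega
      · rw [if_neg hn]
        have : hystFlips θlo θhi x m ≤ naiveFlips θ x m + 1 := by
          split_ifs at ih <;> omega
        split_ifs <;> omega
    · rw [if_neg hf]
      have hft : hystState θlo θhi x (m + 1) = decide (θ ≤ x (m + 1)) := by
        apply flip_naive θlo θhi θ x hlo hhi (m + 1)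
        rw [if_neg (Nat.succ_ne_zero m)]
        simpa using hf
      rw [if_pos hft]
      by_cases hp : hystState θlo θhi x m = decide (θ ≤ x m)
      · have hn : ¬((θ ≤ x (m + 1)) ↔ (θ ≤ x m)) := by
          intro hiff
          apply hf
          rw [hft, hp]
          simp [hiff]
        rw [if_neg hn]
        rw [if_pos hp] at ih
        omega
      · rw [if_neg hp] at ih
        split_ifs <;> omega

/-- Hysteresis reduces alert flips: for any threshold `θ` with
`θlo < θ ≤ θhi`, the number of hysteresis flips is at most the number of naive
single-threshold flips plus one. -/
theorem hysteresis_flip_bound (θlo θhi θ : ℝ) (x : ℕ → ℝ) (n : ℕ)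
    (hthr : θlo < θhi) (hlo : θlo < θ) (hhi : θ ≤ θhi) :
    hystFlips θlo θhi x n ≤ naiveFlips θ x n + 1 := by
  have := key θlo θhi θ x hlo hhi n
  split_ifs at this <;> omega
end
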